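/- arXiv:2605.03735 — 4 statements merged into one kernel-verified Lean document; each statement's English description precedes it below -/
import Mathlib

section
/- Let N be a nilpotent group in which the centralizer of every non-central element is solvable of derived length at most ℓ. Then N is solvable of derived length at most ℓ + 1. -/
open scoped commutatorElement

lemma aux_ucs_stab {G : Type*} [Group G] (n : ℕ)
    (hn : upperCentralSeries G (n + 1) ≤ upperCentralSeries G n) :
    ∀ m, upperCentralSeries G m ≤ upperCentralSeries G n := by
  intro m
  induction m with
  | zero => exact upperCentralSeries_mono G (Nat.zero_le n)
  | succ m ih =>
    rcases le_or_gt (m + 1) n with hle | hlt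
    · exact upperCentralSeries_mono G hle
    · intro x hx
      apply hn
      change x ∈ Subgroup.upperCentralSeries G (m + 1) at hx
      change x ∈ Subgroup.upperCentralSeries G (n + 1)
      rw [mem_upperCentralSeries_succ_iff] at hx ⊢
      intro y
      exact ih (hx y)

lemma aux_deriv {G : Type*} [Group G] (K : Subgroup G) (hK : commutator G ≤ K) :
    ∀ n, derivedSeries G (n + 1) ≤ (derivedSeries K n).map K.subtype := by
  intro n
  induction n with
  | zero =>
    rw [derivedSeries_zero, derivedSeries_one,
      show (Subgroup.map K.subtype ⊤ : Subgroup G) = K by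
        rw [← MonoidHom.range_eq_map, Subgroup.range_subtype]]
    exact hK
  | succ n ih =>
    exact Subgroup.commutator_le_map_commutator ih ih

/-- A nilpotent group in which the centralizer of every non-central element is solvable
of derived length at most `ℓ` is solvable of derived length at most `ℓ + 1`. -/
theorem stmt_1 {N : Type*} [Group N] (hnil : Group.IsNilpotent N) (ℓ : ℕ)
    (h : ∀ g : N, g ∉ Subgroup.center N →
      derivedSeries ↥(Subgroup.centralizer {g}) ℓ = ⊥) :
    derivedSeries N (ℓ + 1) = ⊥ := by
  by_cases hc : Subgroup.center N = ⊤
  · -- abelian case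
    have hcomm : commutator N = ⊥ := by
      rw [commutator, Subgroup.commutator_eq_bot_iff_le_centralizer]
      intro x _
      rw [Subgroup.mem_centralizer_iff]
      intro y _
      have hy : y ∈ Subgroup.center N := hc ▸ Subgroup.mem_top y
      exact (Subgroup.mem_center_iff.mp hy x).symm
    have : ∀ n, derivedSeries N (n + 1) = ⊥ := by
      intro n
      induction n with
      | zero => rw [derivedSeries_one]; exact hcomm
      | succ n ih => rw [derivedSeries_succ, ih]; simp
    exact this ℓ
  · -- nonabelian case: find g ∈ Z₂ \ Z₁
    have hZ2 : ¬ upperCentralSeries N 2 ≤ Subgroup.center N := by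
      intro hle
      apply hc
      obtain ⟨n, hn⟩ := hnil
      have h1 : upperCentralSeries N (1 + 1) ≤ upperCentralSeries N 1 := by
        exact hle.trans (Subgroup.upperCentralSeries_one N).ge
      have := aux_ucs_stab 1 h1 n
      change Subgroup.upperCentralSeries N n ≤ Subgroup.upperCentralSeries N 1 at this
      rw [hn, upperCentralSeries_one] at this
      exact top_le_iff.mp this
    obtain ⟨g, hg2, hgc⟩ := SetLike.not_le_iff_exists.mp hZ2
    have hg : ∀ x : N, g * x * g⁻¹ * x⁻¹ ∈ Subgroup.center N := by
      intro x
      have hx := mem_upperCentralSeries_succ_iff.mp hg2 x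
      rwa [upperCentralSeries_one] at hx
    -- commutator N ≤ centralizer {g}
    have hK : commutator N ≤ Subgroup.centralizer {g} := by
      rw [commutator, Subgroup.commutator_le]
      intro x _ y _
      rw [Subgroup.mem_centralizer_iff]
      rintro z rfl
      have hx : ∀ w : N, w * (z * x * z⁻¹ * x⁻¹) = (z * x * z⁻¹ * x⁻¹) * w :=
        Subgroup.mem_center_iff.mp (hg x)
      have hy : ∀ w : N, w * (z * y * z⁻¹ * y⁻¹) = (z * y * z⁻¹ * y⁻¹) * w :=
        Subgroup.mem_center_iff.mp (hg y)
      set a := z * x * z⁻¹ * x⁻¹ with ha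
      set b := z * y * z⁻¹ * y⁻¹ with hb
      have hx' : ∀ w : N, w * a⁻¹ = a⁻¹ * w := fun w =>
        (Commute.inv_right (hx w : Commute w a) : _)
      have hy' : ∀ w : N, w * b⁻¹ = b⁻¹ * w := fun w =>
        (Commute.inv_right (hy w : Commute w b) : _)
      have hzx : z * x = a * x * z := by rw [ha]; group
      have hzy : z * y = b * y * z := by rw [hb]; group
      have hzx' : z * x⁻¹ = x⁻¹ * a⁻¹ * z := by
        have h2 : z * x⁻¹ * z⁻¹ = x⁻¹ * a⁻¹ := by rw [ha]; group
        calc z * x⁻¹ = (z * x⁻¹ * z⁻¹) * z := by group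
          _ = x⁻¹ * a⁻¹ * z := by rw [h2]
      have hzy' : z * y⁻¹ = y⁻¹ * b⁻¹ * z := by
        have h2 : z * y⁻¹ * z⁻¹ = y⁻¹ * b⁻¹ := by rw [hb]; group
        calc z * y⁻¹ = (z * y⁻¹ * z⁻¹) * z := by group
          _ = y⁻¹ * b⁻¹ * z := by rw [h2]
      show z * ⁅x, y⁆ = ⁅x, y⁆ * z
      rw [commutatorElement_def]
      calc z * (x * y * x⁻¹ * y⁻¹)
          = (z * x) * y * x⁻¹ * y⁻¹ := by group
        _ = a * x * (z * y) * x⁻¹ * y⁻¹ := by rw [hzx]; group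
        _ = a * x * (b * y) * (z * x⁻¹) * y⁻¹ := by rw [hzy]; group
        _ = a * x * (b * y) * (x⁻¹ * a⁻¹) * (z * y⁻¹) := by rw [hzx']; group
        _ = a * x * (b * y) * (x⁻¹ * a⁻¹) * (y⁻¹ * b⁻¹ * z) := by rw [hzy']
        _ = a * (x * b) * (y * x⁻¹ * a⁻¹ * y⁻¹ * b⁻¹) * z := by group
        _ = a * (b * x) * (y * x⁻¹ * a⁻¹ * y⁻¹ * b⁻¹) * z := by rw [hy x]
        _ = a * b * x * y * (x⁻¹ * a⁻¹) * y⁻¹ * b⁻¹ * z := by group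
        _ = a * b * x * y * (a⁻¹ * x⁻¹) * y⁻¹ * b⁻¹ * z := by rw [hx' x⁻¹]
        _ = a * b * x * (y * a⁻¹) * x⁻¹ * y⁻¹ * b⁻¹ * z := by group
        _ = a * b * x * (a⁻¹ * y) * x⁻¹ * y⁻¹ * b⁻¹ * z := by rw [hx' y]
        _ = a * b * (x * a⁻¹) * y * x⁻¹ * y⁻¹ * b⁻¹ * z := by group
        _ = a * b * (a⁻¹ * x) * y * x⁻¹ * y⁻¹ * b⁻¹ * z := by rw [hx' x]
        _ = a * (b * a⁻¹) * x * y * x⁻¹ * y⁻¹ * b⁻¹ * z := by group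
        _ = a * (a⁻¹ * b) * x * y * x⁻¹ * y⁻¹ * b⁻¹ * z := by rw [hx' b]
        _ = b * x * y * x⁻¹ * (y⁻¹ * b⁻¹) * z := by group
        _ = b * x * y * x⁻¹ * (b⁻¹ * y⁻¹) * z := by rw [hy' y⁻¹]
        _ = b * x * y * (x⁻¹ * b⁻¹) * y⁻¹ * z := by group
        _ = b * x * y * (b⁻¹ * x⁻¹) * y⁻¹ * z := by rw [hy' x⁻¹]
        _ = b * x * (y * b⁻¹) * x⁻¹ * y⁻¹ * z := by group
        _ = b * x * (b⁻¹ * y) * x⁻¹ * y⁻¹ * z := by rw [hy' y]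
        _ = b * (x * b⁻¹) * y * x⁻¹ * y⁻¹ * z := by group
        _ = b * (b⁻¹ * x) * y * x⁻¹ * y⁻¹ * z := by rw [hy' x]
        _ = x * y * x⁻¹ * y⁻¹ * z := by group
    have hbot := h g hgc
    have hfin := aux_deriv (Subgroup.centralizer {g}) hK ℓ
    rw [hbot] at hfin
    simpa using hfin
end

section
/- Let G be a group, A, B, F subgroups with F ≤ B ≤ A, where F is normal in G, B is normal in A, F is finite, and A/B is finite. Then the almost centralizer of A in G equals the almost centralizer of B/F in G, i.e., for all g ∈ G: [A : C_A(g)] is finite if and only if the centralizer of gF acting on B/F has finite index in B/F. -/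
private lemma conj_comm_aux {G : Type*} [Group G] (g x y : G) :
    g⁻¹ * x * g * x⁻¹ = g⁻¹ * y * g * y⁻¹ ↔ x⁻¹ * y * g = g * (x⁻¹ * y) := by
  constructor
  · intro h
    have h2 : x * g * x⁻¹ = y * g * y⁻¹ := by
      calc x * g * x⁻¹ = g * (g⁻¹ * x * g * x⁻¹) := by group
        _ = g * (g⁻¹ * y * g * y⁻¹) := by rw [h]
        _ = y * g * y⁻¹ := by group
    calc x⁻¹ * y * g = x⁻¹ * (y * g * y⁻¹) * y := by group
      _ = x⁻¹ * (x * g * x⁻¹) * y := by rw [h2]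
      _ = g * (x⁻¹ * y) := by group
  · intro h
    have h2 : y * g * y⁻¹ = x * g * x⁻¹ := by
      calc y * g * y⁻¹ = x * (x⁻¹ * y * g) * y⁻¹ := by group
        _ = x * (g * (x⁻¹ * y)) * y⁻¹ := by rw [h]
        _ = x * g * x⁻¹ := by group
    calc g⁻¹ * x * g * x⁻¹ = g⁻¹ * (x * g * x⁻¹) := by group
      _ = g⁻¹ * (y * g * y⁻¹) := by rw [h2]
      _ = g⁻¹ * y * g * y⁻¹ := by group

/-- Let `F ≤ B ≤ A ≤ G` with `F ⊴ G` finite, `B ⊴ A`, and `A/B` finite. Then for any `g : G`,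
the centralizer of `g` has finite index in `A` iff the centralizer of `gF` in the image of
`B` in `G/F` has finite index in it. -/
theorem stmt_7 {G : Type*} [Group G] (F B A : Subgroup G)
    (hFB : F ≤ B) (hBA : B ≤ A) (hFN : F.Normal) (hFfin : Finite ↥F)
    (hBnormA : (B.subgroupOf A).Normal) (hABfin : B.relIndex A ≠ 0) (g : G) :
    (Subgroup.centralizer {g}).relIndex A ≠ 0 ↔
      (Subgroup.centralizer {(QuotientGroup.mk' F) g}).relIndex
        (B.map (QuotientGroup.mk' F)) ≠ 0 := by
  set π := QuotientGroup.mk' F with hπ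
  set C := Subgroup.centralizer {g} with hC
  set D := (Subgroup.centralizer {π g}).comap π with hD
  have hrw : (Subgroup.centralizer {π g}).relIndex (B.map π) = D.relIndex B := by
    rw [hD, Subgroup.relIndex_comap]
  rw [hrw]
  -- C ≤ D
  have hCD : C ≤ D := by
    intro x hx
    rw [hD, Subgroup.mem_comap, Subgroup.mem_centralizer_singleton_iff]
    rw [hC, Subgroup.mem_centralizer_singleton_iff] at hx
    rw [← map_mul, ← map_mul, hx]
  -- key: C has finite relIndex in D ⊓ B via injection of cosets into F
  have hkey : C.relIndex (D ⊓ B) ≠ 0 := by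
    have hmemF : ∀ d : ↥(D ⊓ B), g⁻¹ * (d : G) * g * (d : G)⁻¹ ∈ F := by
      intro d
      have hd : π (d : G) * π g = π g * π (d : G) :=
        Subgroup.mem_centralizer_singleton_iff.mp d.2.1
      have h1 : π (g⁻¹ * (d : G) * g * (d : G)⁻¹) = 1 := by
        simp only [map_mul, map_inv]
        rw [mul_assoc (π g)⁻¹ (π (d : G)) (π g), hd]
        group
      rwa [hπ, QuotientGroup.mk'_apply, QuotientGroup.eq_one_iff] at h1
    have hfin : Finite ((↥(D ⊓ B)) ⧸ C.subgroupOf (D ⊓ B)) := by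
      let f : ((↥(D ⊓ B)) ⧸ C.subgroupOf (D ⊓ B)) → ↥F := fun q =>
        Quotient.liftOn' q (fun d => (⟨g⁻¹ * (d : G) * g * (d : G)⁻¹, hmemF d⟩ : ↥F))
          (by
            intro d₁ d₂ h
            rw [QuotientGroup.leftRel_apply] at h
            have hx := Subgroup.mem_centralizer_singleton_iff.mp
              (Subgroup.mem_subgroupOf.mp h)
            simp only [Subgroup.coe_mul, Subgroup.coe_inv] at hx
            ext
            exact (conj_comm_aux g (d₁ : G) (d₂ : G)).mpr hx)
      apply Finite.of_injective f
      intro q₁ q₂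
      refine Quotient.inductionOn₂' q₁ q₂ ?_
      intro d₁ d₂ h
      have h' : g⁻¹ * (d₁ : G) * g * (d₁ : G)⁻¹ = g⁻¹ * (d₂ : G) * g * (d₂ : G)⁻¹ :=
        congrArg Subtype.val h
      apply Quotient.sound'
      rw [QuotientGroup.leftRel_apply, Subgroup.mem_subgroupOf]
      rw [hC, Subgroup.mem_centralizer_singleton_iff]
      simp only [Subgroup.coe_mul, Subgroup.coe_inv]
      exact (conj_comm_aux g (d₁ : G) (d₂ : G)).mp h'
    exact Subgroup.index_ne_zero_of_finite
  constructor
  · intro hA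
    have hCB : C.relIndex B ≠ 0 := fun h0 => hA (Subgroup.relIndex_eq_zero_of_le_right hBA h0)
    intro h0
    exact hCB (Nat.eq_zero_of_zero_dvd (h0 ▸ Subgroup.relIndex_dvd_of_le_left B hCD))
  · intro hDB
    have h1 : (D ⊓ B).relIndex B ≠ 0 := by rwa [Subgroup.inf_relIndex_right]
    have h2 : C.relIndex B ≠ 0 := Subgroup.relIndex_ne_zero_trans hkey h1
    exact Subgroup.relIndex_ne_zero_trans h2 hABfin
end

section
/- Let G be a group, g ∈ G, B ≤ G a subgroup normalized by g, and F ⊴ G a finite subgroup with F ≤ B. If the commutator set [B, g] is contained in a finite set modulo F (i.e., [B,g]F/F is finite), then [B, g] is finite, and hence C_B(g) has finite index in B. -/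
open scoped commutatorElement

private lemma comm_of_centralizer {G : Type*} [Group G] {g x y : G}
    (h : x⁻¹ * y ∈ Subgroup.centralizer {g}) : ⁅x, g⁆ = ⁅y, g⁆ := by
  rw [Subgroup.mem_centralizer_singleton_iff] at h
  simp only [commutatorElement_def]
  have hx : x * g * x⁻¹ = y * g * y⁻¹ := by
    calc x * g * x⁻¹ = x * (g * (x⁻¹ * y)) * (x⁻¹ * y)⁻¹ * x⁻¹ := by group
      _ = x * (x⁻¹ * y * g) * (x⁻¹ * y)⁻¹ * x⁻¹ := by rw [← h]
      _ = y * g * y⁻¹ := by group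
  calc x * g * x⁻¹ * g⁻¹ = (x * g * x⁻¹) * g⁻¹ := by group
    _ = (y * g * y⁻¹) * g⁻¹ := by rw [hx]
    _ = y * g * y⁻¹ * g⁻¹ := by group

private lemma centralizer_of_comm {G : Type*} [Group G] {g x y : G}
    (h : ⁅x, g⁆ = ⁅y, g⁆) : x⁻¹ * y ∈ Subgroup.centralizer {g} := by
  rw [Subgroup.mem_centralizer_singleton_iff]
  simp only [commutatorElement_def] at h
  have hx : x * g * x⁻¹ = y * g * y⁻¹ := by
    calc x * g * x⁻¹ = (x * g * x⁻¹ * g⁻¹) * g := by group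
      _ = (y * g * y⁻¹ * g⁻¹) * g := by rw [h]
      _ = y * g * y⁻¹ := by group
  calc x⁻¹ * y * g = x⁻¹ * (y * g * y⁻¹) * y := by group
    _ = x⁻¹ * (x * g * x⁻¹) * y := by rw [hx]
    _ = g * (x⁻¹ * y) := by group

/-- Let `g : G`, `B ≤ G` a subgroup normalized by `g`, and `F ⊴ G` a finite subgroup with
`F ≤ B`. If the set of commutators `[B, g]` is finite modulo `F`, then `[B, g]` is finite
and `C_B(g)` has finite index in `B`. -/
theorem stmt_8 {G : Type*} [Group G] (g : G) (B F : Subgroup G)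
    (hFB : F ≤ B) (hFN : F.Normal) (hFfin : Finite ↥F)
    (hnorm : ∀ b ∈ B, g * b * g⁻¹ ∈ B)
    (hfin : ((QuotientGroup.mk' F) '' {x : G | ∃ b ∈ B, x = ⁅b, g⁆}).Finite) :
    {x : G | ∃ b ∈ B, x = ⁅b, g⁆}.Finite ∧
      (Subgroup.centralizer {g}).relIndex B ≠ 0 := by
  set S : Set G := {x : G | ∃ b ∈ B, x = ⁅b, g⁆} with hS
  have hFset : (F : Set G).Finite := Set.finite_coe_iff.mpr hFfin
  -- fibers of mk' F are finite
  have hfiber : ∀ y : G ⧸ F, ((QuotientGroup.mk' F) ⁻¹' {y}).Finite := by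
    intro y
    obtain ⟨a, rfl⟩ := QuotientGroup.mk'_surjective F y
    have heq : (QuotientGroup.mk' F) ⁻¹' {QuotientGroup.mk' F a}
        = (fun z => a * z) '' (F : Set G) := by
      ext x
      simp only [Set.mem_preimage, Set.mem_singleton_iff, Set.mem_image,
        QuotientGroup.mk'_apply]
      constructor
      · intro h
        refine ⟨a⁻¹ * x, ?_, by group⟩
        exact (QuotientGroup.eq).mp h.symm
      · rintro ⟨z, hz, rfl⟩
        exact ((QuotientGroup.eq).mpr (by simpa using hz)).symm
    rw [heq]
    exact hFset.image _
  have hSfin : S.Finite := by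
    have hsub : S ⊆ ⋃ y ∈ ((QuotientGroup.mk' F) '' S),
        (QuotientGroup.mk' F) ⁻¹' {y} := by
      intro x hx
      exact Set.mem_biUnion (Set.mem_image_of_mem _ hx) rfl
    exact (hfin.biUnion fun y _ => hfiber y).subset hsub
  have hSfinty : Finite ↥S := hSfin
  refine ⟨hSfin, ?_⟩
  rw [Subgroup.relIndex]
  have hQfin : Finite (B ⧸ (Subgroup.centralizer {g}).subgroupOf B) := by
    let f : B ⧸ (Subgroup.centralizer {g}).subgroupOf B → ↥S := fun q =>
      Quotient.liftOn' q (fun b => (⟨⁅(b : G), g⁆, b, b.2, rfl⟩ : S))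
        (by
          rintro b b' hr
          rw [QuotientGroup.leftRel_apply] at hr
          have hc : (b : G)⁻¹ * (b' : G) ∈ Subgroup.centralizer {g} := by
            simpa [Subgroup.mem_subgroupOf] using hr
          exact Subtype.ext (comm_of_centralizer hc))
    have hinj : Function.Injective f := by
      intro q q'
      induction q using Quotient.inductionOn'
      induction q' using Quotient.inductionOn'
      rename_i b b'
      intro h
      have h' : ⁅(b : G), g⁆ = ⁅(b' : G), g⁆ := congrArg Subtype.val h
      apply Quotient.sound'
      rw [QuotientGroup.leftRel_apply]
      show (↑(b⁻¹ * b') : G) ∈ Subgroup.centralizer {g}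
      simpa using centralizer_of_comm h'
    exact Finite.of_injective f hinj
  exact Subgroup.index_ne_zero_of_finite
end

section
/- Let G be a group with normal subgroups R_l ≤ R_{l+1} ⊴ G such that R_l is solvable of derived length d. Then the group C_{C_G(R_l)}(R_{l+1}/R_l) / C_G(R_{l+1}) is solvable of derived length at most d. -/
open scoped commutatorElement

/-- Given normal subgroups `Rl ≤ Rk` of `G` with `Rl` solvable of derived length `d`,
the group `C_{C_G(Rl)}(Rk/Rl) / C_G(Rk)` is solvable of derived length at most `d`:
for any subgroup `S` whose carrier is `{g ∈ C_G(Rl) | [Rk, g] ≤ Rl}`, the `d`-th derived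
subgroup of `S` is contained in `C_G(Rk)`. -/
theorem stmt_11 {G : Type*} [Group G] (Rl Rk : Subgroup G)
    (hsub : Rl ≤ Rk) (hRl : Rl.Normal) (hRk : Rk.Normal)
    (d : ℕ) (hd : derivedSeries ↥Rl d = ⊥)
    (S : Subgroup G)
    (hS : (S : Set G) =
      {g : G | g ∈ Subgroup.centralizer (Rl : Set G) ∧ ∀ x ∈ Rk, ⁅x, g⁆ ∈ Rl}) :
    derivedSeries ↥S d ≤ (Subgroup.centralizer (Rk : Set G)).subgroupOf S := by
  have hmem : ∀ g : G, g ∈ S ↔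
      g ∈ Subgroup.centralizer (Rl : Set G) ∧ ∀ x ∈ Rk, ⁅x, g⁆ ∈ Rl := by
    intro g
    constructor
    · intro hg; have := hS ▸ (show g ∈ (S : Set G) from hg); exact this
    · intro hg; show g ∈ (S : Set G); rw [hS]; exact hg
  intro g hg
  -- for each x ∈ Rk, the map g ↦ ⁅x, g⁆ is a homomorphism S →* Rl
  rw [Subgroup.mem_subgroupOf, Subgroup.mem_centralizer_iff]
  intro x hx
  have key : ∀ x : G, x ∈ Rk → ∃ f : ↥S →* ↥Rl,
      ∀ s : ↥S, (f s : G) = ⁅x, (s : G)⁆ := by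
    intro x hx
    refine ⟨{ toFun := fun s => ⟨⁅x, (s : G)⁆, ((hmem s).mp s.2).2 x hx⟩
              map_one' := by ext; simp
              map_mul' := ?_ }, fun s => rfl⟩
    intro a b
    ext
    have ha := (hmem a).mp a.2
    have hb := (hmem b).mp b.2
    have hcomm : (a : G) * ⁅x, (b : G)⁆ = ⁅x, (b : G)⁆ * (a : G) :=
      (ha.1 ⁅x, (b : G)⁆ (hb.2 x hx)).symm
    show (⁅x, ((a*b : ↥S) : G)⁆ : G) = ⁅x, (a:G)⁆ * ⁅x, (b:G)⁆
    have h2 : ⁅x, ((a*b : ↥S) : G)⁆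
        = ⁅x, (a:G)⁆ * ((a:G) * ⁅x, (b:G)⁆ * (a:G)⁻¹) := by
      push_cast
      simp only [commutatorElement_def, mul_inv_rev]
      group
    rw [h2, ← mul_assoc, hcomm]
    group
  obtain ⟨f, hf⟩ := key x hx
  have hfg : f g ∈ derivedSeries ↥Rl d :=
    map_derivedSeries_le_derivedSeries f d ⟨g, hg, rfl⟩
  rw [hd, Subgroup.mem_bot] at hfg
  have h1 : ⁅x, (g : G)⁆ = 1 := by
    have := congrArg Subtype.val hfg
    rw [hf g] at this; simpa using this
  exact commutatorElement_eq_one_iff_commute.mp h1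
end
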